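/- Induction step for the one-dimensional Laplacian–Laguerre formula: Let ε > 0 and n ∈ ℕ. For all (q,p) ∈ ℝ², −(ε/2) Δ ( G(q,p) · L_n(ρ(q,p)) ) = G(q,p) · [ (1+2n) L_n(ρ(q,p)) + (n+1) L_{n+1}(ρ(q,p)) + n L_{n−1}(ρ(q,p)) ], where G(q,p) = (πε)^{−1} e^{−(q²+p²)/ε}, Δ = ∂²/∂q² + ∂²/∂p², and ρ(q,p) = (2/ε)(q² + p²). -/

import Mathlib

open Finset

noncomputable section

/-- The `n`-th Laguerre polynomial. -/
def laguerre (n : ℕ) (x : ℝ) : ℝ :=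
  ∑ j ∈ Finset.range (n + 1), (n.choose (n - j) : ℝ) * (-x) ^ j / (Nat.factorial j)

/-- The Laplacian `∂²/∂q² + ∂²/∂p²` on `ℝ²`. -/
def lap2 (f : ℝ × ℝ → ℝ) : ℝ × ℝ → ℝ := fun z =>
  iteratedDeriv 2 (fun t => f (t, z.2)) z.1 + iteratedDeriv 2 (fun t => f (z.1, t)) z.2

/-- The phase-space Gaussian `G(q,p) = (πε)^{−1} e^{−(q²+p²)/ε}` on `ℝ²`. -/
def gauss2 (ε : ℝ) : ℝ × ℝ → ℝ := fun z =>
  (Real.pi * ε)⁻¹ * Real.exp (-(z.1 ^ 2 + z.2 ^ 2) / ε)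

/-! Since `e^{-(q²+p²)/ε} = e^{-ρ/2}`, the function `G · L_n ∘ ρ` is the radial function
`(πε)⁻¹ h(ρ)` with `h(x) = e^{-x/2} L_n(x)`. On `ℝ²` the Laplacian of `w ↦ g(a|w|²)` is
`4a (x g''(x) + g'(x))` at `x = a|w|²`, so with `a = 2/ε` the left side is `-4 (x h'' + h')`.
Now `e^{x/2} (x h'' + h') = x L_n'' + (1 - x) L_n' + (x/4 - 1/2) L_n = (x/4 - 1/2 - n) L_n` by
Laguerre's equation, and the three-term recurrence `(n+1) L_{n+1} + n L_{n-1} = (2n+1-x) L_n`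
splits `(4n+2-x) L_n` into the right side. Both Laguerre identities are linear consequences of
`L_{n+1}' = L_n' - L_n` and `x L_n' = n (L_n - L_{n-1})`, which are checked coefficientwise. -/

open Polynomial

def laguerrePoly (n : ℕ) : ℝ[X] :=
  ∑ k ∈ range (n + 1), C ((-1 : ℝ) ^ k * n.choose k / k.factorial) * X ^ k

theorem coeff_laguerrePoly (n k : ℕ) :
    (laguerrePoly n).coeff k = (-1 : ℝ) ^ k * n.choose k / k.factorial := by
  rw [laguerrePoly, finsetSum_coeff]
  simp only [coeff_C_mul, coeff_X_pow, mul_ite, mul_one, mul_zero, sum_ite_eq, mem_range]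
  split_ifs with hk
  · rfl
  · rw [Nat.choose_eq_zero_of_lt (by omega)]
    simp

theorem eval_laguerrePoly (n : ℕ) (x : ℝ) : (laguerrePoly n).eval x = laguerre n x := by
  rw [laguerrePoly, eval_finsetSum, laguerre]
  refine sum_congr rfl fun k hk => ?_
  rw [Nat.choose_symm (Nat.lt_succ_iff.mp (mem_range.mp hk)), neg_pow]
  simp only [eval_mul, eval_C, eval_pow, eval_X]
  ring

theorem derivative_laguerrePoly_succ (n : ℕ) :
    derivative (laguerrePoly (n + 1)) = derivative (laguerrePoly n) - laguerrePoly n := by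
  ext k
  simp only [coeff_derivative, coeff_sub, coeff_laguerrePoly, Nat.choose_succ_succ',
    Nat.factorial_succ]
  push_cast
  field_simp
  ring

theorem X_mul_derivative_laguerrePoly (n : ℕ) :
    X * derivative (laguerrePoly n) = (n : ℝ[X]) * (laguerrePoly n - laguerrePoly (n - 1)) := by
  rcases n with _ | m
  · simp [laguerrePoly]
  ext k
  rcases k with _ | j
  · simp [coeff_laguerrePoly]
  rw [coeff_X_mul, ← C_eq_natCast, coeff_C_mul, Nat.add_sub_cancel]
  have hchoose : ((m : ℝ) + 1) * m.choose j = (m.choose j + m.choose (j + 1)) * (j + 1) := by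
    exact_mod_cast Nat.choose_succ_succ' m j ▸ Nat.add_one_mul_choose_eq m j
  simp only [coeff_derivative, coeff_sub, coeff_laguerrePoly, Nat.factorial_succ,
    Nat.choose_succ_succ']
  push_cast
  field_simp
  linear_combination -hchoose

theorem laguerrePoly_ode (n : ℕ) :
    X * derivative (derivative (laguerrePoly n)) + (1 - X) * derivative (laguerrePoly n)
      + (n : ℝ[X]) * laguerrePoly n = 0 := by
  rcases n with _ | m
  · simp [laguerrePoly]
  have hfirst := X_mul_derivative_laguerrePoly (m + 1)
  rw [Nat.add_sub_cancel] at hfirst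
  have hsecond := congrArg derivative hfirst
  simp only [derivative_mul, derivative_X, derivative_natCast, derivative_sub, one_mul, zero_mul,
    zero_add] at hsecond
  linear_combination hsecond + ((m + 1 : ℕ) : ℝ[X]) * derivative_laguerrePoly_succ m - hfirst

theorem laguerrePoly_three_term_recurrence (n : ℕ) :
    ((n : ℝ[X]) + 1) * laguerrePoly (n + 1) + (n : ℝ[X]) * laguerrePoly (n - 1)
      = (2 * (n : ℝ[X]) + 1 - X) * laguerrePoly n := by
  have hsucc := X_mul_derivative_laguerrePoly (n + 1)
  simp only [Nat.add_sub_cancel, derivative_laguerrePoly_succ, Nat.cast_succ] at hsucc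
  linear_combination X_mul_derivative_laguerrePoly n - hsucc

section RadialLaplacian

variable {g : ℝ → ℝ}

theorem iteratedDeriv_two_comp_mul_sq_add (hg : Differentiable ℝ g)
    (hg' : Differentiable ℝ (deriv g)) (a c t : ℝ) :
    iteratedDeriv 2 (fun s => g (a * (s ^ 2 + c))) t
      = 4 * a ^ 2 * t ^ 2 * deriv (deriv g) (a * (t ^ 2 + c))
          + 2 * a * deriv g (a * (t ^ 2 + c)) := by
  have hinner (s : ℝ) : HasDerivAt (fun s => a * (s ^ 2 + c)) (a * (2 * s)) s := by
    simpa using ((hasDerivAt_pow 2 s).add_const c).const_mul a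
  have hfirst : deriv (fun s => g (a * (s ^ 2 + c)))
      = fun s => deriv g (a * (s ^ 2 + c)) * (a * (2 * s)) :=
    funext fun s => ((hg _).hasDerivAt.comp s (hinner s)).deriv
  have hsecond : HasDerivAt (fun s => deriv g (a * (s ^ 2 + c)) * (a * (2 * s)))
      (deriv (deriv g) (a * (t ^ 2 + c)) * (a * (2 * t)) * (a * (2 * t))
        + deriv g (a * (t ^ 2 + c)) * (a * 2)) t :=
    ((hg' _).hasDerivAt.comp t (hinner t)).mul
      (by simpa using ((hasDerivAt_id t).const_mul 2).const_mul a)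
  rw [iteratedDeriv_succ, iteratedDeriv_one, hfirst, hsecond.deriv]
  ring

theorem lap2_comp_mul_normSq (hg : Differentiable ℝ g) (hg' : Differentiable ℝ (deriv g))
    (a : ℝ) (z : ℝ × ℝ) :
    lap2 (fun w => g (a * (w.1 ^ 2 + w.2 ^ 2))) z
      = 4 * a * (a * (z.1 ^ 2 + z.2 ^ 2) * deriv (deriv g) (a * (z.1 ^ 2 + z.2 ^ 2))
          + deriv g (a * (z.1 ^ 2 + z.2 ^ 2))) := by
  have hswap : (fun t => g (a * (z.1 ^ 2 + t ^ 2))) = fun t => g (a * (t ^ 2 + z.1 ^ 2)) := by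
    simp only [add_comm (z.1 ^ 2)]
  simp only [lap2]
  rw [hswap, iteratedDeriv_two_comp_mul_sq_add hg hg', iteratedDeriv_two_comp_mul_sq_add hg hg',
    add_comm (z.2 ^ 2)]
  ring

end RadialLaplacian

def dampedPoly (A : ℝ) (p : ℝ[X]) (x : ℝ) : ℝ := A * Real.exp (-x / 2) * p.eval x

def dampedDerivative (p : ℝ[X]) : ℝ[X] := derivative p - C (1 / 2) * p

theorem hasDerivAt_dampedPoly (A : ℝ) (p : ℝ[X]) (x : ℝ) :
    HasDerivAt (dampedPoly A p) (dampedPoly A (dampedDerivative p) x) x := by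
  have hexp : HasDerivAt (fun x => Real.exp (-x / 2)) (Real.exp (-x / 2) * (-1 / 2)) x := by
    simpa using ((hasDerivAt_id x).neg.div_const 2).exp
  refine ((hexp.const_mul A).mul (p.hasDerivAt x)).congr_deriv ?_
  simp only [dampedPoly, dampedDerivative, eval_sub, eval_mul, eval_C]
  ring

theorem deriv_dampedPoly (A : ℝ) (p : ℝ[X]) :
    deriv (dampedPoly A p) = dampedPoly A (dampedDerivative p) :=
  funext fun x => (hasDerivAt_dampedPoly A p x).deriv

theorem differentiable_dampedPoly (A : ℝ) (p : ℝ[X]) : Differentiable ℝ (dampedPoly A p) :=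
  fun x => (hasDerivAt_dampedPoly A p x).differentiableAt

theorem neg_four_mul_radial_dampedPoly_laguerrePoly (A : ℝ) (n : ℕ) (x : ℝ) :
    -4 * (x * dampedPoly A (dampedDerivative (dampedDerivative (laguerrePoly n))) x
        + dampedPoly A (dampedDerivative (laguerrePoly n)) x)
      = A * Real.exp (-x / 2) * ((1 + 2 * (n : ℝ)) * laguerre n x
          + ((n : ℝ) + 1) * laguerre (n + 1) x + (n : ℝ) * laguerre (n - 1) x) := by
  have hode := congrArg (eval x) (laguerrePoly_ode n)
  have hrec := congrArg (eval x) (laguerrePoly_three_term_recurrence n)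
  simp only [eval_add, eval_sub, eval_mul, eval_X, eval_one, eval_natCast, eval_ofNat,
    eval_zero] at hode hrec
  simp only [dampedPoly, dampedDerivative, derivative_sub, derivative_C_mul, eval_sub, eval_mul,
    eval_C, ← eval_laguerrePoly]
  linear_combination A * Real.exp (-x / 2) * (-4 * hode - hrec)

/-- Induction step for the one-dimensional Laplacian–Laguerre formula:
`−(ε/2)Δ(G · L_n∘ρ) = G · [(1+2n) L_n∘ρ + (n+1) L_{n+1}∘ρ + n L_{n−1}∘ρ]`.
(The term `n · L_{n−1}` vanishes for `n = 0`, implementing the convention `L_{−1} = 0`.) -/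
theorem laplacian_gauss_laguerre_step
    (ε : ℝ) (hε : 0 < ε) (n : ℕ) (z : ℝ × ℝ) :
    (-(ε / 2)) *
        lap2 (fun w => gauss2 ε w * laguerre n (2 / ε * (w.1 ^ 2 + w.2 ^ 2))) z =
      gauss2 ε z *
        ((1 + 2 * (n : ℝ)) * laguerre n (2 / ε * (z.1 ^ 2 + z.2 ^ 2)) +
          ((n : ℝ) + 1) * laguerre (n + 1) (2 / ε * (z.1 ^ 2 + z.2 ^ 2)) +
          (n : ℝ) * laguerre (n - 1) (2 / ε * (z.1 ^ 2 + z.2 ^ 2))) := by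
  have hexp (r : ℝ) : -(2 / ε * r) / 2 = -r / ε := by ring
  have hprofile : (fun w => gauss2 ε w * laguerre n (2 / ε * (w.1 ^ 2 + w.2 ^ 2)))
      = fun w => dampedPoly (Real.pi * ε)⁻¹ (laguerrePoly n) (2 / ε * (w.1 ^ 2 + w.2 ^ 2)) := by
    funext w
    rw [dampedPoly, eval_laguerrePoly, gauss2, hexp]
  have hscale : -(ε / 2) * (4 * (2 / ε)) = -4 := by
    field_simp
  rw [hprofile, lap2_comp_mul_normSq (differentiable_dampedPoly _ _)
      (deriv_dampedPoly _ _ ▸ differentiable_dampedPoly _ _),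
    deriv_dampedPoly, deriv_dampedPoly, ← mul_assoc, hscale,
    neg_four_mul_radial_dampedPoly_laguerrePoly, hexp, gauss2]
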